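/- Let π = r_0 ⋯ r_n be a closed finite trace over U with unique bottom SCC B of its trace graph, let r* ∈ B be a state with #_π(r*) = m_π, let u* ∈ U be a state not occurring in π, and let c ∈ (0,1). Define the Markov chain M' = (S_π ∪ {u*}, P', μ_π) by P'(r*,u*) := c, P'(r*,s) := (1−c)·P_π(r*,s) for s ∈ S_π, P'(u*,u*) := 1, and P'(r,s) := P_π(r,s) for all r ∈ S_π with r ≠ r*. Then M' is a finite-state Markov chain over U and L(M',π) = (1−c)^{m_π} · L(M_π,π). -/
import Mathlib


open Finset

/-- A finite-state Markov chain over the state universe `U`: a finite nonempty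
set `S` of states, a transition probability matrix `P` supported in `S × S`
whose rows (indexed by states of `S`) sum to `1`, and an initial probability
distribution `μ` supported in `S`. -/
structure FinMC (U : Type*) where
  S : Finset U
  S_ne : S.Nonempty
  P : U → U → ℝ
  P_nonneg : ∀ a b, 0 ≤ P a b
  P_le_one : ∀ a b, P a b ≤ 1
  P_zero : ∀ a b, a ∉ S ∨ b ∉ S → P a b = 0
  P_row : ∀ a ∈ S, ∑ b ∈ S, P a b = 1
  μ : U → ℝ
  μ_nonneg : ∀ a, 0 ≤ μ a
  μ_zero : ∀ a, a ∉ S → μ a = 0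
  μ_sum : ∑ a ∈ S, μ a = 1

/-- The likelihood `L(M, π) = μ(r 0) · ∏_{i=1}^{n} P(r (i-1), r i)` that the
chain `M` generates the finite trace `π = r 0 ⋯ r n`. -/
def FinMC.lik {U : Type*} (M : FinMC U) (r : ℕ → U) (n : ℕ) : ℝ :=
  M.μ (r 0) * ∏ i ∈ range n, M.P (r i) (r (i + 1))

/-- `traceT r n a b` is the number of indices `0 ≤ i ≤ n - 1` with
`r i = a` and `r (i+1) = b`, i.e. the number of occurrences of the
transition `(a, b)` in the trace `r 0 ⋯ r n`. -/
def traceT {U : Type*} [DecidableEq U] (r : ℕ → U) (n : ℕ) (a b : U) : ℕ :=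
  ((range n).filter (fun i => r i = a ∧ r (i + 1) = b)).card

/-- The set of states `{r 0, …, r n}` occurring in the trace `r 0 ⋯ r n`. -/
def traceStates {U : Type*} [DecidableEq U] (r : ℕ → U) (n : ℕ) : Finset U :=
  (range (n + 1)).image r

/-- The empirical transition matrix of the trace `r 0 ⋯ r n`:
`P_π(a, b) = T_π(a, b) / ∑_{c} T_π(a, c)`. -/
noncomputable def traceP {U : Type*} [DecidableEq U] (r : ℕ → U) (n : ℕ) (a b : U) : ℝ :=
  (traceT r n a b : ℝ) / ∑ c ∈ traceStates r n, (traceT r n a c : ℝ)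

/-- The likelihood `L(M_π, π)` that the induced chain `M_π` generates `π`
(the initial distribution of `M_π` gives probability 1 to `r 0`). -/
noncomputable def traceLik {U : Type*} [DecidableEq U] (r : ℕ → U) (n : ℕ) : ℝ :=
  ∏ i ∈ range n, traceP r n (r i) (r (i + 1))

/-- The edge relation of the trace graph `G_π` of `π = r 0 ⋯ r n`. -/
def traceEdge {U : Type*} (r : ℕ → U) (n : ℕ) (a b : U) : Prop :=
  ∃ i < n, r i = a ∧ r (i + 1) = b

/-- Reachability in the trace graph `G_π`. -/
def traceReach {U : Type*} (r : ℕ → U) (n : ℕ) : U → U → Prop :=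
  Relation.ReflTransGen (traceEdge r n)

/-- `#_π(a)`: the number of occurrences of `a` among `r 0, …, r (n-1)`. -/
def traceCount {U : Type*} [DecidableEq U] (r : ℕ → U) (n : ℕ) (a : U) : ℕ :=
  ((range n).filter (fun i => r i = a)).card


section Helpers
variable {U : Type*} [DecidableEq U] (r : ℕ → U) (n : ℕ)

lemma mem_traceStates_iff (a : U) : a ∈ traceStates r n ↔ ∃ i ≤ n, r i = a := by
  simp only [traceStates, Finset.mem_image, Finset.mem_range, Nat.lt_succ_iff]

lemma traceT_sum (a : U) :
    ∑ b ∈ traceStates r n, traceT r n a b = traceCount r n a := by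
  unfold traceT traceCount
  simp_rw [Finset.card_filter]
  rw [Finset.sum_comm]
  refine Finset.sum_congr rfl fun i hi => ?_
  rw [Finset.mem_range] at hi
  have h1 : r (i + 1) ∈ traceStates r n := by
    rw [mem_traceStates_iff]; exact ⟨i + 1, by omega, rfl⟩
  by_cases h : r i = a
  · simp [h, Finset.sum_ite_eq, h1]
  · simp [h]

lemma traceT_eq_zero_left {a : U} (ha : a ∉ traceStates r n) (b : U) :
    traceT r n a b = 0 := by
  rw [traceT, Finset.card_eq_zero, Finset.filter_eq_empty_iff]
  rintro i hi ⟨h1, h2⟩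
  rw [Finset.mem_range] at hi
  exact ha ((mem_traceStates_iff r n a).2 ⟨i, by omega, h1⟩)

lemma traceT_eq_zero_right (a : U) {b : U} (hb : b ∉ traceStates r n) :
    traceT r n a b = 0 := by
  rw [traceT, Finset.card_eq_zero, Finset.filter_eq_empty_iff]
  rintro i hi ⟨h1, h2⟩
  rw [Finset.mem_range] at hi
  exact hb ((mem_traceStates_iff r n b).2 ⟨i + 1, by omega, h2⟩)

lemma traceP_nonneg (a b : U) : 0 ≤ traceP r n a b := by
  unfold traceP
  apply div_nonneg (by positivity)
  exact Finset.sum_nonneg fun _ _ => by positivity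

lemma traceP_le_one (a b : U) : traceP r n a b ≤ 1 := by
  unfold traceP
  set D : ℝ := ∑ c ∈ traceStates r n, (traceT r n a c : ℝ) with hD
  have hD0 : 0 ≤ D := Finset.sum_nonneg fun _ _ => by positivity
  rcases eq_or_lt_of_le hD0 with h | h
  · rw [← h, div_zero]; norm_num
  · rw [div_le_one h]
    by_cases hb : b ∈ traceStates r n
    · exact Finset.single_le_sum (f := fun c => (traceT r n a c : ℝ))
        (fun _ _ => by positivity) hb
    · rw [traceT_eq_zero_right r n a hb]; simpa using hD0

lemma traceP_row_sum {a : U} (ha : 0 < traceCount r n a) :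
    ∑ b ∈ traceStates r n, traceP r n a b = 1 := by
  unfold traceP
  rw [← Finset.sum_div]
  have : ∑ c ∈ traceStates r n, (traceT r n a c : ℝ) = (traceCount r n a : ℝ) := by
    rw [← Nat.cast_sum, traceT_sum]
  rw [this, div_self (by positivity)]

lemma traceCount_pos_of_mem (hclosed : ∃ i < n, r i = r n) {a : U}
    (ha : a ∈ traceStates r n) : 0 < traceCount r n a := by
  rw [mem_traceStates_iff] at ha
  obtain ⟨j, hj, hja⟩ := ha
  rw [traceCount, Finset.card_pos]
  rcases lt_or_eq_of_le hj with h | h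
  · exact ⟨j, Finset.mem_filter.2 ⟨Finset.mem_range.2 h, hja⟩⟩
  · obtain ⟨i, hi, hir⟩ := hclosed
    exact ⟨i, Finset.mem_filter.2 ⟨Finset.mem_range.2 hi, by rw [hir]; exact h ▸ hja⟩⟩

end Helpers

/-- Let `π = r 0 ⋯ r n` be a closed finite trace with unique
bottom SCC `B` of its trace graph, let `rstar ∈ B` attain `m_π = min_{a ∈ B} #_π(a)`,
let `ustar` be a fresh state not occurring in `π` and `c ∈ (0,1)`. Adding to
`M_π` an escape transition `rstar → ustar` of probability `c` (rescaling the
other transitions out of `rstar` by `1 - c`, and making `ustar` absorbing)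
yields a finite-state Markov chain `M'` with states `S_π ∪ {ustar}`, transition
matrix `P'`, initial distribution `μ'` (probability 1 on `r 0`), and
`L(M', π) = (1 - c) ^ m_π · L(M_π, π)`. -/
theorem escape_chain_lik {U : Type*} [DecidableEq U] (r : ℕ → U) (n : ℕ)
    (hclosed : ∃ i < n, r i = r n)
    (B : Set U)
    (hBsub : ∀ a ∈ B, ∃ i ≤ n, r i = a)
    (hBne : B.Nonempty)
    (hBconn : ∀ a ∈ B, ∀ b ∈ B, traceReach r n a b)
    (hBbot : ∀ a ∈ B, ∀ b, traceEdge r n a b → b ∈ B)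
    (hBfull : ∀ a ∈ B, ∀ b, traceReach r n a b → traceReach r n b a → b ∈ B)
    (rstar : U) (hrstar : rstar ∈ B)
    (hrstarmin : traceCount r n rstar = sInf (traceCount r n '' B))
    (ustar : U) (hustar : ∀ i ≤ n, r i ≠ ustar)
    (c : ℝ) (hc0 : 0 < c) (hc1 : c < 1)
    (P' : U → U → ℝ)
    (hP' : P' = fun a b =>
      if a = ustar then (if b = ustar then 1 else 0)
      else if a = rstar then (if b = ustar then c else (1 - c) * traceP r n a b)
      else traceP r n a b)
    (μ' : U → ℝ) (hμ' : μ' = fun u => if u = r 0 then 1 else 0) :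
    ∃ M' : FinMC U, M'.S = traceStates r n ∪ {ustar} ∧ M'.P = P' ∧ M'.μ = μ' ∧
      M'.lik r n = (1 - c) ^ sInf (traceCount r n '' B) * traceLik r n := by

  classical
  have hru : ustar ∉ traceStates r n := by
    rw [mem_traceStates_iff]
    rintro ⟨i, hi, hri⟩
    exact hustar i hi hri
  have hrs : rstar ∈ traceStates r n := by
    rw [mem_traceStates_iff]; exact hBsub rstar hrstar
  have hrsu : rstar ≠ ustar := fun h => hru (h ▸ hrs)
  have hr0 : r 0 ∈ traceStates r n := (mem_traceStates_iff r n _).2 ⟨0, Nat.zero_le n, rfl⟩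
  have hr0u : r 0 ≠ ustar := hustar 0 (Nat.zero_le n)
  have hdisj : Disjoint (traceStates r n) ({ustar} : Finset U) := by
    simp [Finset.disjoint_singleton_right, hru]
  have hTu : ∀ a, traceP r n a ustar = 0 := by
    intro a
    rw [traceP, traceT_eq_zero_right r n a hru, Nat.cast_zero, zero_div]
  -- the chain
  refine ⟨⟨traceStates r n ∪ {ustar}, ⟨ustar, by simp⟩, P', ?_, ?_, ?_, ?_, μ', ?_, ?_, ?_⟩,
    rfl, rfl, rfl, ?_⟩
  · -- nonneg
    intro a b
    subst hP'
    simp only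
    have h1 := traceP_nonneg r n a b
    split_ifs <;> nlinarith
  · -- le_one
    intro a b
    subst hP'
    simp only
    have h1 := traceP_nonneg r n a b
    have h2 := traceP_le_one r n a b
    split_ifs <;> nlinarith
  · -- P_zero
    intro a b hab
    subst hP'
    simp only [Finset.mem_union, Finset.mem_singleton, not_or] at hab
    have hP0l : ∀ x y : U, x ∉ traceStates r n → traceP r n x y = 0 := fun x y hx => by
      rw [traceP, traceT_eq_zero_left r n hx, Nat.cast_zero, zero_div]
    have hP0r : ∀ x y : U, y ∉ traceStates r n → traceP r n x y = 0 := fun x y hy => by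
      rw [traceP, traceT_eq_zero_right r n x hy, Nat.cast_zero, zero_div]
    rcases hab with ⟨ha, hau⟩ | ⟨hb, hbu⟩
    · have h1 : a ≠ ustar := hau
      have h2 : a ≠ rstar := fun h => ha (h ▸ hrs)
      simp [h1, h2, hP0l a b ha]
    · have h1 : b ≠ ustar := hbu
      by_cases ha : a = ustar
      · simp [ha, h1]
      · by_cases h2 : a = rstar
        · simp [ha, h2, h1, hP0r rstar b hb]
        · simp [ha, h2, hP0r a b hb]
  · -- row sums
    have hPu : ∀ b, P' ustar b = if b = ustar then (1:ℝ) else 0 := fun b => by simp [hP']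
    have hPr : ∀ b, P' rstar b = if b = ustar then c else (1 - c) * traceP r n rstar b :=
      fun b => by simp [hP', hrsu]
    have hPo : ∀ a b : U, a ≠ ustar → a ≠ rstar → P' a b = traceP r n a b :=
      fun a b h1 h2 => by simp [hP', h1, h2]
    intro a ha
    rw [Finset.sum_union hdisj, Finset.sum_singleton]
    simp only [Finset.mem_union, Finset.mem_singleton] at ha
    by_cases hau : a = ustar
    · rw [hau, hPu, if_pos rfl, Finset.sum_eq_zero, zero_add]
      intro b hb
      rw [hPu, if_neg (fun (h : _ = ustar) => hru (h ▸ hb))]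
    · have haS : a ∈ traceStates r n := ha.resolve_right hau
      have hcount := traceCount_pos_of_mem r n hclosed haS
      by_cases har : a = rstar
      · rw [har, hPr, if_pos rfl,
          Finset.sum_congr rfl (fun b hb => by
            rw [hPr, if_neg (fun (h : _ = ustar) => hru (h ▸ hb))]),
          ← Finset.mul_sum, traceP_row_sum r n (by rw [← har]; exact hcount)]
        ring
      · rw [hPo a ustar hau har, hTu a, add_zero,
          Finset.sum_congr rfl (fun b _ => hPo a b hau har), traceP_row_sum r n hcount]
  · -- μ nonneg
    intro a
    subst hμ'
    simp only
    split_ifs <;> norm_num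
  · -- μ zero
    intro a ha
    subst hμ'
    simp only [Finset.mem_union, Finset.mem_singleton, not_or] at ha
    have : a ≠ r 0 := fun h => ha.1 (h ▸ hr0)
    simp [this]
  · -- μ sum
    subst hμ'
    rw [Finset.sum_ite_eq' (traceStates r n ∪ {ustar}) (r 0) (fun _ => (1:ℝ))]
    simp [hr0]
  · -- likelihood
    unfold FinMC.lik
    subst hμ' hP'
    simp only [if_pos rfl, one_mul]
    have hstep : ∀ i ∈ range n,
        (fun a b =>
          if a = ustar then (if b = ustar then (1:ℝ) else 0)
          else if a = rstar then (if b = ustar then c else (1 - c) * traceP r n a b)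
          else traceP r n a b) (r i) (r (i + 1))
        = (if r i = rstar then (1 - c) else 1) * traceP r n (r i) (r (i + 1)) := by
      intro i hi
      rw [Finset.mem_range] at hi
      have h1 : r i ≠ ustar := hustar i (by omega)
      have h2 : r (i + 1) ≠ ustar := hustar (i + 1) (by omega)
      by_cases h : r i = rstar <;> simp [h1, h2, h, hrsu]
    rw [Finset.prod_congr rfl hstep, Finset.prod_mul_distrib]
    have : ∏ i ∈ range n, (if r i = rstar then (1 - c) else 1)
        = (1 - c) ^ sInf (traceCount r n '' B) := by
      rw [Finset.prod_ite, Finset.prod_const, Finset.prod_const, one_pow, mul_one,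
        ← hrstarmin, traceCount]
    rw [this, traceLik]
    simp
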